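/- Let G be a locally compact group and H a compact open subgroup of G. A function f : G → ℂ belongs to P(G) if and only if there exist finitely many functions f₁, …, fₘ, g₁, …, gₘ, f'₁, …, f'ₙ, g'₁, …, g'ₙ ∈ C₀(G) such that for all x, y ∈ G: (i) f(xy)·χ_H(y) = Σ_{i=1}^m f_i(x)·g_i(y), and (ii) f(y)·χ_H(xy) = Σ_{j=1}^n f'_j(x)·g'_j(y), where χ_H is the indicator function of H. -/

import Mathlib

open Filter Topology

/-- The space `P(G)` of polynomial functions on `G`: all continuous compactly supported
`f : G → ℂ` such that for some compact open subgroup `K` of `G` there are finitely many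
`fᵢ ∈ C_c(G)` and continuous `φᵢ : K → ℂ` with `f (x * k) = ∑ i, fᵢ x * φᵢ k` for all
`x ∈ G`, `k ∈ K`. -/
def PolyFun (G : Type*) [Group G] [TopologicalSpace G] : Set (G → ℂ) :=
  {f | Continuous f ∧ HasCompactSupport f ∧
    ∃ K : Subgroup G, IsCompact (K : Set G) ∧ IsOpen (K : Set G) ∧
      ∃ (n : ℕ) (fi : Fin n → G → ℂ) (φ : Fin n → ↥K → ℂ),
        (∀ i, Continuous (fi i) ∧ HasCompactSupport (fi i)) ∧
        (∀ i, Continuous (φ i)) ∧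
        ∀ (x : G) (k : ↥K), f (x * (k : G)) = ∑ i, fi i x * φ i k}

/-
Both directions rest on the fact that a compact set meets only finitely many cosets of an
open subgroup, and that the indicator of such a coset is continuous.

If `f ∈ P(G)` with subgroup `K`, cover `H` by finitely many cosets `rL` of `L = K ∩ H`; for
`y ∈ rL` the defining identity gives `f(xy) = ∑ fᵢ(xr) φᵢ(r⁻¹y)`, which yields (i). Cover the
compact support of `f` by finitely many cosets `rH`; for `y ∈ rH` one has `χ_H(xy) = χ_H(xr)`,
which yields (ii).

Conversely, `y = 1` in (i) shows that `f` is continuous, and (i) for `y ∈ H` is the identity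
defining `P(G)` with `K = H`. By (ii) with `x = r⁻¹`, every `f · χ_{rH}` lies in the span of the
finitely many `g'ⱼ`; those that are nonzero have disjoint supports, hence are linearly
independent, so only finitely many cosets of `H` meet the support of `f`. Their union is compact
and open, and cutting the `fᵢ` off on it gives compactly supported functions.
-/

open ZeroAtInfty QuotientGroup

theorem continuous_dite_of_isClopen {X β : Type*} [TopologicalSpace X] [TopologicalSpace β] [Zero β]
    {s : Set X} [DecidablePred (· ∈ s)] (hs : IsClopen s) {φ : s → β} (hφ : Continuous φ) :
    Continuous fun x => if h : x ∈ s then φ ⟨x, h⟩ else 0 := by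
  refine continuous_iff_continuousAt.2 fun x => ?_
  by_cases hx : x ∈ s
  · have : ContinuousOn (fun x => if h : x ∈ s then φ ⟨x, h⟩ else 0) s := by
      rw [continuousOn_iff_continuous_domRestrict]
      convert hφ using 1
      ext k
      simp [k.2]
    exact this.continuousAt (hs.isOpen.mem_nhds hx)
  · refine (continuousAt_const (y := (0 : β))).congr ?_
    filter_upwards [hs.isClosed.isOpen_compl.mem_nhds hx] with y hy
    rw [dif_neg (show y ∉ s from hy)]

def c₀AlgTensor (X : Type*) [TopologicalSpace X] : Submodule ℂ (X → X → ℂ) :=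
  Submodule.span ℂ (Set.range fun p : C₀(X, ℂ) × C₀(X, ℂ) => fun x y => p.1 x * p.2 y)

section C₀Tensor

variable {X : Type*} [TopologicalSpace X]

theorem mem_c₀AlgTensor_iff {k : X → X → ℂ} :
    k ∈ c₀AlgTensor X ↔ ∃ (m : ℕ) (fi gi : Fin m → X → ℂ),
      (∀ i, Continuous (fi i) ∧ Tendsto (fi i) (cocompact X) (𝓝 0)) ∧
      (∀ i, Continuous (gi i) ∧ Tendsto (gi i) (cocompact X) (𝓝 0)) ∧
      ∀ x y, k x y = ∑ i, fi i x * gi i y := by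
  constructor
  · intro hk
    obtain ⟨m, c, g, rfl⟩ := Submodule.mem_span_set'.1 hk
    choose p hp using fun i => (g i).2
    refine ⟨m, fun i => ⇑(c i • (p i).1), fun i => ⇑(p i).2,
      fun i => ⟨map_continuous _, zero_at_infty _⟩, fun i => ⟨map_continuous _, zero_at_infty _⟩,
      fun x y => ?_⟩
    simp [Finset.sum_apply, ← hp, mul_assoc]
  · rintro ⟨m, fi, gi, hfi, hgi, hk⟩
    have : k = ∑ i, fun x y => fi i x * gi i y := by
      ext x y
      simp [Finset.sum_apply, hk]
    rw [this]
    exact Submodule.sum_mem _ fun i _ => Submodule.subset_span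
      ⟨(⟨⟨fi i, (hfi i).1⟩, (hfi i).2⟩, ⟨⟨gi i, (hgi i).1⟩, (hgi i).2⟩), rfl⟩

theorem sum_mul_mem_c₀AlgTensor {ι : Type*} (s : Finset ι) {a b : ι → X → ℂ}
    (ha : ∀ i ∈ s, Continuous (a i) ∧ HasCompactSupport (a i))
    (hb : ∀ i ∈ s, Continuous (b i) ∧ HasCompactSupport (b i)) :
    (fun x y => ∑ i ∈ s, a i x * b i y) ∈ c₀AlgTensor X := by
  have : (fun x y => ∑ i ∈ s, a i x * b i y) = ∑ i ∈ s, fun x y => a i x * b i y := by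
    ext x y
    simp [Finset.sum_apply]
  rw [this]
  exact Submodule.sum_mem _ fun i hi => Submodule.subset_span
    ⟨(⟨⟨a i, (ha i hi).1⟩, (ha i hi).2.is_zero_at_infty⟩,
      ⟨⟨b i, (hb i hi).1⟩, (hb i hi).2.is_zero_at_infty⟩), rfl⟩

theorem exists_finite_forall_mem_span_of_mem_c₀AlgTensor {k : X → X → ℂ}
    (hk : k ∈ c₀AlgTensor X) : ∃ W : Set (X → ℂ), W.Finite ∧ ∀ x, k x ∈ Submodule.span ℂ W := by
  obtain ⟨m, fi, gi, -, -, hk⟩ := mem_c₀AlgTensor_iff.1 hk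
  refine ⟨Set.range gi, Set.finite_range gi, fun x => ?_⟩
  have : k x = ∑ i, fi i x • gi i := by
    ext y
    simp [Finset.sum_apply, hk]
  rw [this]
  exact Submodule.sum_mem _ fun i _ =>
    Submodule.smul_mem _ _ (Submodule.subset_span (Set.mem_range_self i))

end C₀Tensor

section Quotient

variable {G : Type*} [Group G] [TopologicalSpace G] [IsTopologicalGroup G] {N : Subgroup G}

theorem QuotientGroup.finite_image_mk_of_isCompact (hN : IsOpen (N : Set G)) {s : Set G}
    (hs : IsCompact s) : (mk '' s : Set (G ⧸ N)).Finite :=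
  haveI := discreteTopology hN
  (hs.image continuous_mk).finite_of_discrete

theorem QuotientGroup.isClopen_preimage_mk (hN : IsOpen (N : Set G)) (S : Set (G ⧸ N)) :
    IsClopen (mk ⁻¹' S) :=
  haveI := discreteTopology hN
  (isClopen_discrete S).preimage continuous_mk

theorem QuotientGroup.isCompact_preimage_mk (hN : IsCompact (N : Set G)) {S : Set (G ⧸ N)}
    (hS : S.Finite) : IsCompact (mk ⁻¹' S) := by
  have : S = mk '' (Quotient.out '' S) := by
    rw [Set.image_image]
    simp
  rw [this, preimage_image_mk_eq_mul]
  exact (hS.image _).isCompact.mul hN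

end Quotient

theorem sum_mul_indicator_preimage_mk_singleton {G ι : Type*} [Group G] [Fintype ι]
    {K L : Subgroup G} [DecidableEq (G ⧸ L)] (hLK : L ≤ K) {f : G → ℂ} {u Φ : ι → G → ℂ}
    (hfΦ : ∀ x, ∀ k ∈ K, f (x * k) = ∑ i, u i x * Φ i k) (q : G ⧸ L) (x y : G) :
    ∑ i, u i (x * q.out) * (mk ⁻¹' {q}).indicator (fun y => Φ i (q.out⁻¹ * y)) y =
      if (y : G ⧸ L) = q then f (x * y) else 0 := by
  split_ifs with hy
  · subst hy
    obtain ⟨l, hout⟩ := mk_out_eq_mul L y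
    have hl : (y : G ⧸ L).out⁻¹ * y ∈ K := by simpa [hout] using hLK l⁻¹.2
    rw [show x * y = x * (y : G ⧸ L).out * ((y : G ⧸ L).out⁻¹ * y) by group, hfΦ _ _ hl]
    simp
  · simp [Set.indicator_of_notMem (show y ∉ mk ⁻¹' {q} from hy)]

section Forward

variable {G : Type*} [Group G] [TopologicalSpace G] [IsTopologicalGroup G] {H : Subgroup G}

theorem mul_indicator_mul_mem_c₀AlgTensor (hHc : IsCompact (H : Set G))
    (hHo : IsOpen (H : Set G)) {f : G → ℂ} (hf : Continuous f) (hfs : HasCompactSupport f) :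
    (fun x y => f y * (H : Set G).indicator 1 (x * y)) ∈ c₀AlgTensor G := by
  classical
  set Q := (finite_image_mk_of_isCompact hHo hfs).toFinset
  have key : ∀ x y, f y * (H : Set G).indicator 1 (x * y) =
      ∑ q ∈ Q, (H : Set G).indicator 1 (x * q.out) * (mk ⁻¹' {q}).indicator f y := by
    intro x y
    by_cases hy : f y = 0
    · simp [hy, Set.indicator_apply]
    rw [Finset.sum_eq_single (y : G ⧸ H)]
    · obtain ⟨h, hout⟩ := mk_out_eq_mul H y
      rw [Set.indicator_of_mem (show y ∈ mk ⁻¹' {(y : G ⧸ H)} from rfl), hout, ← mul_assoc,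
        mul_comm]
      simp only [Set.indicator_apply, SetLike.mem_coe, H.mul_mem_cancel_right h.2, Pi.one_apply]
    · intro q _ hq
      rw [Set.indicator_of_notMem (show y ∉ mk ⁻¹' {q} from fun h => hq h.symm), mul_zero]
    · exact fun hyQ =>
        (hyQ ((Set.Finite.mem_toFinset _).2 (Set.mem_image_of_mem _ (subset_tsupport f hy)))).elim
  rw [show (fun x y => f y * (H : Set G).indicator 1 (x * y)) = _ from funext₂ key]
  exact sum_mul_mem_c₀AlgTensor Q
    (fun q _ => ⟨((IsClopen.continuous_indicator ⟨H.isClosed_of_isOpen hHo, hHo⟩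
      continuous_const).comp (continuous_mul_const _)),
      (HasCompactSupport.intro hHc fun _ hx => Set.indicator_of_notMem hx _).comp_homeomorph
        (Homeomorph.mulRight _)⟩)
    (fun q _ => ⟨(isClopen_preimage_mk hHo _).continuous_indicator hf,
      hfs.mono (by rw [Set.support_indicator]; exact Set.inter_subset_right)⟩)

theorem mul_indicator_mem_c₀AlgTensor_of_mem_polyFun (hHc : IsCompact (H : Set G))
    (hHo : IsOpen (H : Set G)) {f : G → ℂ} (hf : f ∈ PolyFun G) :
    (fun x y => f (x * y) * (H : Set G).indicator 1 y) ∈ c₀AlgTensor G := by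
  classical
  obtain ⟨-, -, K, hKc, hKo, n, u, φ, hu, hφ, hfuφ⟩ := hf
  set L : Subgroup G := K ⊓ H
  have hLo : IsOpen (L : Set G) := hKo.inter hHo
  have hLc : IsCompact (L : Set G) := hKc.inter_right (H.isClosed_of_isOpen hHo)
  set Φ : Fin n → G → ℂ := fun i g => if h : g ∈ K then φ i ⟨g, h⟩ else 0
  have hfΦ : ∀ x, ∀ k ∈ K, f (x * k) = ∑ i, u i x * Φ i k := fun x k hk => by
    simp [Φ, hk, hfuφ x ⟨k, hk⟩]
  set Q := (finite_image_mk_of_isCompact (N := L) hLo hHc).toFinset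
  have hQ : ∀ y : G, (y : G ⧸ L) ∈ Q ↔ y ∈ H := by
    intro y
    refine ⟨fun hy => ?_, fun hy => (Set.Finite.mem_toFinset _).2 (Set.mem_image_of_mem _ hy)⟩
    obtain ⟨h, hh, hhy⟩ := (Set.Finite.mem_toFinset _).1 hy
    simpa using H.mul_mem hh (QuotientGroup.eq.1 hhy).2
  set ψ : (G ⧸ L) × Fin n → G → ℂ := fun p =>
    (mk ⁻¹' {p.1}).indicator fun y => Φ p.2 (p.1.out⁻¹ * y)
  have key : ∀ x y, f (x * y) * (H : Set G).indicator 1 y =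
      ∑ p ∈ Q ×ˢ Finset.univ, u p.2 (x * p.1.out) * ψ p y := by
    intro x y
    rw [Finset.sum_product, Finset.sum_congr rfl fun q _ =>
      sum_mul_indicator_preimage_mk_singleton inf_le_left hfΦ q x y, Finset.sum_ite_eq]
    by_cases hy : y ∈ H <;> simp [hy, hQ]
  rw [show (fun x y => f (x * y) * (H : Set G).indicator 1 y) = _ from funext₂ key]
  exact sum_mul_mem_c₀AlgTensor _
    (fun p _ => ⟨(hu p.2).1.comp (continuous_mul_const _),
      (hu p.2).2.comp_homeomorph (Homeomorph.mulRight _)⟩)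
    (fun p _ => ⟨(isClopen_preimage_mk hLo _).continuous_indicator
      (((continuous_dite_of_isClopen ⟨K.isClosed_of_isOpen hKo, hKo⟩ (hφ p.2)).comp
        (continuous_const_mul _))),
      HasCompactSupport.intro (isCompact_preimage_mk hLc (Set.finite_singleton p.1))
        fun _ hy => Set.indicator_of_notMem hy _⟩)

end Forward

theorem QuotientGroup.finite_image_mk_support_of_forall_mem_span {𝕜 G : Type*} [Field 𝕜]
    [Group G] (H : Subgroup G) {f : G → 𝕜} {W : Set (G → 𝕜)} (hW : W.Finite)
    (hf : ∀ x, (fun y => f y * (H : Set G).indicator 1 (x * y)) ∈ Submodule.span 𝕜 W) :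
    (mk '' Function.support f : Set (G ⧸ H)).Finite := by
  set S : Set (G ⧸ H) := mk '' Function.support f
  choose p hp hpS using fun q : S => q.2
  set v : S → G → 𝕜 := fun q => (mk ⁻¹' {(q : G ⧸ H)}).indicator f
  have hv : ∀ q : S, v q = fun y => f y * (H : Set G).indicator 1 ((q : G ⧸ H).out⁻¹ * y) := by
    intro q
    ext y
    have : (y : G ⧸ H) = q ↔ (q : G ⧸ H).out⁻¹ * y ∈ H := by
      rw [← QuotientGroup.eq, QuotientGroup.out_eq', eq_comm]
    by_cases hy : (y : G ⧸ H) = q <;> simp [v, hy, ← this]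
  have hli : LinearIndependent 𝕜 v := by
    refine LinearIndependent.of_pairwise_dual_eq_zero_one v
      (fun q => (f (p q))⁻¹ • LinearMap.proj (p q)) (fun q q' hqq' => ?_) (fun q => ?_)
    · have : p q ∉ mk ⁻¹' {(q' : G ⧸ H)} := fun h =>
        hqq' (Subtype.ext ((hpS q).symm.trans h))
      simp [v, Set.indicator_of_notMem this]
    · have : p q ∈ mk ⁻¹' {(q : G ⧸ H)} := hpS q
      simpa [v, Set.indicator_of_mem this] using inv_mul_cancel₀ (hp q)
  have := hW.to_subtype
  exact Set.finite_coe_iff.1 <| hli.finite_of_le_span_finite v W <|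
    Set.range_subset_iff.2 fun q => hv q ▸ hf _

theorem mem_polyFun_of_mem_c₀AlgTensor {G : Type*} [Group G] [TopologicalSpace G]
    [IsTopologicalGroup G] {H : Subgroup G} (hHc : IsCompact (H : Set G))
    (hHo : IsOpen (H : Set G)) {f : G → ℂ}
    (h₁ : (fun x y => f (x * y) * (H : Set G).indicator 1 y) ∈ c₀AlgTensor G)
    (h₂ : (fun x y => f y * (H : Set G).indicator 1 (x * y)) ∈ c₀AlgTensor G) :
    f ∈ PolyFun G := by
  obtain ⟨m, u, v, hu, hv, huv⟩ := mem_c₀AlgTensor_iff.1 h₁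
  have hfuv : ∀ x (k : H), f (x * k) = ∑ i, u i x * v i k := fun x k => by
    simpa [Set.indicator_of_mem k.2] using huv x k
  obtain ⟨W, hW, hfW⟩ := exists_finite_forall_mem_span_of_mem_c₀AlgTensor h₂
  set U : Set G := mk ⁻¹' (mk '' Function.support f : Set (G ⧸ H))
  have hUc : IsCompact U :=
    isCompact_preimage_mk hHc (finite_image_mk_support_of_forall_mem_span H hW hfW)
  have hUclopen : IsClopen U := isClopen_preimage_mk hHo _
  have hfU : ∀ x (k : H), x ∉ U → f (x * k) = 0 := fun x k hx => by
    by_contra hxk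
    exact hx ⟨x * k, hxk, mk_mul_of_mem x k.2⟩
  refine ⟨?_, HasCompactSupport.of_support_subset_isCompact hUc (Set.subset_preimage_image _ _),
    H, hHc, hHo, m, fun i => U.indicator (u i), fun i k => v i k,
    fun i => ⟨hUclopen.continuous_indicator (hu i).1,
      HasCompactSupport.intro hUc fun x hx => Set.indicator_of_notMem hx _⟩,
    fun i => (hv i).1.comp continuous_subtype_val, fun x k => ?_⟩
  · have : f = fun x => ∑ i, u i x * v i 1 := funext fun x => by simpa using hfuv x 1
    rw [this]
    exact continuous_finsetSum _ fun i _ => (hu i).1.mul continuous_const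
  · by_cases hx : x ∈ U
    · simp [Set.indicator_of_mem hx, hfuv]
    · simp [Set.indicator_of_notMem hx, hfU x k hx]

open scoped Classical in
theorem mem_polyFun_iff_indicator_factorizations_general
    {G : Type*} [Group G] [TopologicalSpace G] [IsTopologicalGroup G]
    (H : Subgroup G) (hHc : IsCompact (H : Set G)) (hHo : IsOpen (H : Set G))
    (f : G → ℂ) :
    f ∈ PolyFun G ↔
      ∃ (m n : ℕ) (fi gi : Fin m → G → ℂ) (fj gj : Fin n → G → ℂ),
        (∀ i, Continuous (fi i) ∧ Tendsto (fi i) (cocompact G) (𝓝 0)) ∧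
        (∀ i, Continuous (gi i) ∧ Tendsto (gi i) (cocompact G) (𝓝 0)) ∧
        (∀ j, Continuous (fj j) ∧ Tendsto (fj j) (cocompact G) (𝓝 0)) ∧
        (∀ j, Continuous (gj j) ∧ Tendsto (gj j) (cocompact G) (𝓝 0)) ∧
        (∀ x y : G,
          f (x * y) * (if y ∈ H then (1 : ℂ) else 0) = ∑ i, fi i x * gi i y) ∧
        (∀ x y : G,
          f y * (if x * y ∈ H then (1 : ℂ) else 0) = ∑ j, fj j x * gj j y) := by
  have hχ : ∀ g, (H : Set G).indicator (1 : G → ℂ) g = if g ∈ H then 1 else 0 := fun g => by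
    simp [Set.indicator_apply]
  constructor
  · intro hf
    obtain ⟨m, fi, gi, hfi, hgi, hi⟩ := mem_c₀AlgTensor_iff.1
      (mul_indicator_mem_c₀AlgTensor_of_mem_polyFun hHc hHo hf)
    obtain ⟨n, fj, gj, hfj, hgj, hj⟩ := mem_c₀AlgTensor_iff.1
      (mul_indicator_mul_mem_c₀AlgTensor hHc hHo hf.1 hf.2.1)
    exact ⟨m, n, fi, gi, fj, gj, hfi, hgi, hfj, hgj, by simpa only [hχ] using hi,
      by simpa only [hχ] using hj⟩
  · rintro ⟨m, n, fi, gi, fj, gj, hfi, hgi, hfj, hgj, hi, hj⟩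
    exact mem_polyFun_of_mem_c₀AlgTensor hHc hHo
      (mem_c₀AlgTensor_iff.2 ⟨m, fi, gi, hfi, hgi, by simpa only [hχ] using hi⟩)
      (mem_c₀AlgTensor_iff.2 ⟨n, fj, gj, hfj, hgj, by simpa only [hχ] using hj⟩)

open scoped Classical in
/-- Let `G` be a locally compact group and `H` a compact open subgroup. Then `f ∈ P(G)`
iff there are finitely many `fᵢ, gᵢ, f'ⱼ, g'ⱼ ∈ C₀(G)` such that
`f(xy)·χ_H(y) = ∑ᵢ fᵢ(x)·gᵢ(y)` and `f(y)·χ_H(xy) = ∑ⱼ f'ⱼ(x)·g'ⱼ(y)` for all `x, y`. -/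
theorem mem_polyFun_iff_indicator_factorizations
    {G : Type*} [Group G] [TopologicalSpace G] [IsTopologicalGroup G]
    [LocallyCompactSpace G] [T2Space G]
    (H : Subgroup G) (hHc : IsCompact (H : Set G)) (hHo : IsOpen (H : Set G))
    (f : G → ℂ) :
    f ∈ PolyFun G ↔
      ∃ (m n : ℕ) (fi gi : Fin m → G → ℂ) (fj gj : Fin n → G → ℂ),
        (∀ i, Continuous (fi i) ∧ Tendsto (fi i) (cocompact G) (𝓝 0)) ∧
        (∀ i, Continuous (gi i) ∧ Tendsto (gi i) (cocompact G) (𝓝 0)) ∧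
        (∀ j, Continuous (fj j) ∧ Tendsto (fj j) (cocompact G) (𝓝 0)) ∧
        (∀ j, Continuous (gj j) ∧ Tendsto (gj j) (cocompact G) (𝓝 0)) ∧
        (∀ x y : G,
          f (x * y) * (if y ∈ H then (1 : ℂ) else 0) = ∑ i, fi i x * gi i y) ∧
        (∀ x y : G,
          f y * (if x * y ∈ H then (1 : ℂ) else 0) = ∑ j, fj j x * gj j y) :=
  mem_polyFun_iff_indicator_factorizations_general H hHc hHo f
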